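/- A sequence (d(1), …, d(k)) of non-negative integers is the pre-order (depth-first) degree sequence of some rooted plane tree with k vertices if and only if Σ_{i=1}^{j} d(i) ≥ j for every 1 ≤ j ≤ k−1 and Σ_{i=1}^{k} d(i) = k−1. Moreover, the tree is uniquely determined by its pre-order degree sequence. -/

import Mathlib

/-!
Reading a degree sequence from the left, `d(1) + ⋯ + d(j) + 1 - j` is the number of subtrees whose
root has not been visited yet; the sequence codes a tree exactly when this count stays positive and
reaches `0` at the end. Both directions are proved for forests of `c` trees, starting the count at
`c`: a tree's sequence is its root degree followed by the sequences of its subtrees, and conversely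
the first `k` trees of the forest decoded from the tail become the children of a root of degree `k`.
Uniqueness holds because the root degree says how many subtree codes follow, so no code is a proper
prefix of another.
-/

inductive PTree : Type where
  | node : List PTree → PTree

namespace PTree

/-- The number of vertices of a rooted plane tree. -/
def size : PTree → ℕ
  | node ts => 1 + (ts.attach.map (fun x => size x.1)).sum
decreasing_by
  simp only [PTree.node.sizeOf_spec]
  have := List.sizeOf_lt_of_mem x.2
  omega

/-- `degCount i T` is the number of vertices of `T` with exactly `i` children. -/
def degCount (i : ℕ) : PTree → ℕ
  | node ts => (if ts.length = i then 1 else 0) + (ts.attach.map (fun x => degCount i x.1)).sum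
decreasing_by
  simp only [PTree.node.sizeOf_spec]
  have := List.sizeOf_lt_of_mem x.2
  omega

end PTree
namespace PTree

/-- The pre-order (depth-first) degree sequence of a rooted plane tree. -/
def degList : PTree → List ℕ
  | node ts => ts.length :: (ts.attach.map (fun x => degList x.1)).flatten
decreasing_by
  simp only [PTree.node.sizeOf_spec]
  have := List.sizeOf_lt_of_mem x.2
  omega

end PTree

namespace PTree

def forestDegList (ts : List PTree) : List ℕ := (ts.map degList).flatten

@[simp]
theorem forestDegList_nil : forestDegList [] = [] := rfl

@[simp]
theorem forestDegList_cons (t : PTree) (ts : List PTree) :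
    forestDegList (t :: ts) = t.degList ++ forestDegList ts := rfl

theorem forestDegList_append (ts ts' : List PTree) :
    forestDegList (ts ++ ts') = forestDegList ts ++ forestDegList ts' := by
  simp [forestDegList]

theorem degList_node (ts : List PTree) :
    (node ts).degList = ts.length :: forestDegList ts := by
  rw [degList, List.attach_map_val, forestDegList]

mutual
theorem degList_append_inj : ∀ {T₁ T₂ : PTree} {r₁ r₂ : List ℕ},
    T₁.degList ++ r₁ = T₂.degList ++ r₂ → T₁ = T₂ ∧ r₁ = r₂
  | node ts₁, node ts₂, r₁, r₂, h => by
    rw [degList_node, degList_node, List.cons_append, List.cons_append, List.cons.injEq] at h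
    obtain ⟨rfl, rfl⟩ := forestDegList_append_inj h.1 h.2
    exact ⟨rfl, rfl⟩

theorem forestDegList_append_inj : ∀ {ts₁ ts₂ : List PTree} {r₁ r₂ : List ℕ},
    ts₁.length = ts₂.length → forestDegList ts₁ ++ r₁ = forestDegList ts₂ ++ r₂ →
      ts₁ = ts₂ ∧ r₁ = r₂
  | [], [], _, _, _, h => ⟨rfl, h⟩
  | t₁ :: ts₁, t₂ :: ts₂, r₁, r₂, hlen, h => by
    rw [forestDegList_cons, forestDegList_cons, List.append_assoc, List.append_assoc] at h
    obtain ⟨rfl, hrest⟩ := degList_append_inj h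
    obtain ⟨rfl, rfl⟩ := forestDegList_append_inj (Nat.succ_injective hlen) hrest
    exact ⟨rfl, rfl⟩
end

theorem degList_injective : Function.Injective degList := fun T₁ T₂ h =>
  (degList_append_inj (r₁ := []) (r₂ := []) (by simpa using h)).1

/-- `(l.take j).sum + c - j` is the number of trees still to be read after `j` entries of the
concatenated degree sequences `l` of a forest of `c` trees. -/
def IsForestDegSeq (c : ℕ) (l : List ℕ) : Prop :=
  (∀ j < l.length, j < (l.take j).sum + c) ∧ l.sum + c = l.length

theorem isForestDegSeq_nil_iff {c : ℕ} : IsForestDegSeq c [] ↔ c = 0 := by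
  simp [IsForestDegSeq]

theorem not_isForestDegSeq_zero_cons (k : ℕ) (l : List ℕ) : ¬IsForestDegSeq 0 (k :: l) :=
  fun h => by simpa using h.1 0

theorem isForestDegSeq_succ_cons_iff {c k : ℕ} {l : List ℕ} :
    IsForestDegSeq (c + 1) (k :: l) ↔ IsForestDegSeq (k + c) l := by
  constructor
  · rintro ⟨hpre, hsum⟩
    refine ⟨fun j hj => ?_, by simp only [List.sum_cons, List.length_cons] at hsum; omega⟩
    have := hpre (j + 1) (by simpa using hj)
    simp only [List.take_succ_cons, List.sum_cons] at this
    omega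
  · rintro ⟨hpre, hsum⟩
    refine ⟨fun j hj => ?_, by simp only [List.sum_cons, List.length_cons]; omega⟩
    cases j with
    | zero => simp
    | succ j =>
      have := hpre j (by simpa using hj)
      simp only [List.take_succ_cons, List.sum_cons]
      omega

theorem IsForestDegSeq.append {a b : ℕ} {l m : List ℕ} (hl : IsForestDegSeq a l)
    (hm : IsForestDegSeq b m) : IsForestDegSeq (a + b) (l ++ m) := by
  obtain ⟨hlpre, hlsum⟩ := hl
  obtain ⟨hmpre, hmsum⟩ := hm
  refine ⟨fun j hj => ?_, by simp only [List.sum_append, List.length_append]; omega⟩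
  rcases lt_or_ge j l.length with hjl | hjl
  · have := hlpre j hjl
    rw [List.take_append_of_le_length hjl.le]
    omega
  · have := hmpre (j - l.length) (by simp only [List.length_append] at hj; omega)
    rw [List.take_append, List.take_of_length_le hjl, List.sum_append]
    omega

mutual
theorem isForestDegSeq_degList : ∀ T : PTree, IsForestDegSeq 1 T.degList
  | node ts => by
    rw [degList_node, ← zero_add 1, isForestDegSeq_succ_cons_iff]
    exact isForestDegSeq_forestDegList ts

theorem isForestDegSeq_forestDegList : ∀ ts : List PTree,
    IsForestDegSeq ts.length (forestDegList ts)
  | [] => isForestDegSeq_nil_iff.2 rfl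
  | t :: ts => by
    rw [forestDegList_cons, List.length_cons, add_comm]
    exact (isForestDegSeq_degList t).append (isForestDegSeq_forestDegList ts)
end

theorem exists_forestDegList_eq {c : ℕ} {l : List ℕ} (h : IsForestDegSeq c l) :
    ∃ ts : List PTree, ts.length = c ∧ forestDegList ts = l := by
  induction l generalizing c with
  | nil => exact ⟨[], (isForestDegSeq_nil_iff.1 h).symm, rfl⟩
  | cons k l ih =>
    obtain _ | c := c
    · exact absurd h (not_isForestDegSeq_zero_cons k l)
    obtain ⟨ts, hlen, rfl⟩ := ih (isForestDegSeq_succ_cons_iff.1 h)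
    refine ⟨node (ts.take k) :: ts.drop k,
      by simp only [List.length_cons, List.length_drop]; omega, ?_⟩
    rw [forestDegList_cons, degList_node, List.length_take, hlen, min_eq_left (by omega),
      List.cons_append, ← forestDegList_append, List.take_append_drop]

theorem isForestDegSeq_one_iff {d : List ℕ} (hd : d ≠ []) :
    IsForestDegSeq 1 d ↔
      (∀ j, 1 ≤ j → j < d.length → j ≤ (d.take j).sum) ∧ d.sum = d.length - 1 := by
  have hlen : 0 < d.length := List.length_pos_iff.2 hd
  refine and_congr ⟨fun h j _ hj => Nat.lt_succ_iff.1 (h j hj), fun h j hj => ?_⟩ (by omega)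
  rcases Nat.eq_zero_or_pos j with rfl | hj0
  · simp
  · exact Nat.lt_succ_iff.2 (h j hj0 hj)

theorem exists_degList_eq_iff {d : List ℕ} :
    (∃ T : PTree, T.degList = d) ↔ IsForestDegSeq 1 d := by
  refine ⟨fun ⟨T, hT⟩ => hT ▸ isForestDegSeq_degList T, fun h => ?_⟩
  obtain ⟨ts, hlen, rfl⟩ := exists_forestDegList_eq h
  obtain ⟨t, rfl⟩ := List.length_eq_one_iff.1 hlen
  exact ⟨t, by simp⟩

end PTree

/-- A nonempty sequence `d` of non-negative integers is the pre-order degree sequence of some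
rooted plane tree iff `∑_{i=1}^j d(i) ≥ j` for all `1 ≤ j ≤ k-1` and `∑_{i=1}^k d(i) = k-1`;
moreover, a tree is uniquely determined by its pre-order degree sequence. -/
theorem stmt_5 (d : List ℕ) (hd : d ≠ []) :
    ((∃ T : PTree, T.degList = d) ↔
      ((∀ j, 1 ≤ j → j < d.length → j ≤ (d.take j).sum) ∧ d.sum = d.length - 1)) ∧
    (∀ T₁ T₂ : PTree, T₁.degList = T₂.degList → T₁ = T₂) :=
  ⟨PTree.exists_degList_eq_iff.trans (PTree.isForestDegSeq_one_iff hd),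
    fun _ _ h => PTree.degList_injective h⟩
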